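/- arXiv:1601.00246 — 2 statements merged into one kernel-verified Lean document; each statement's English description precedes it below -/
import Mathlib

section
/- Let two point vehicles $j-1$ (leader) and $j$ (follower) have positions $x_{j-1} > x_j$ and velocities $v_{j-1}, v_j \geq 0$ at time $t$. Suppose both perform the maximum braking maneuver: acceleration $u_m < 0$ until velocity reaches $0$, then zero acceleration. If $x_{j-1}(t) - x_j(t) \geq L + \max\{0, (v_j^2 - v_{j-1}^2)/(-2u_m)\}$, then $x_{j-1}(s) - x_j(s) \geq L$ for all $s \geq t$ during and after the maneuver. -/
/-!
Writing `w = max 0 (v + u_m τ)` for the speed after braking for time `τ`, the position under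
maximum braking is `x + (v² - w²) / (-2 u_m)` in both phases, i.e. the stopping point minus
`w² / (-2 u_m)`. If the follower is not faster, its displacement never exceeds the leader's,
since displacement is monotone in the initial speed. If it is faster, the safe-following
distance says exactly that the follower stops at least `L` behind the leader's stopping point,
and the follower's remaining stopping distance `w² / (-2 u_m)` stays at least the leader's.
-/

/-- Position at time `s ≥ t` of a vehicle at `(x0, v0)` at time `t` performing the
maximum braking maneuver with deceleration `um < 0`. -/
noncomputable def mbmPos (um x0 v0 t s : ℝ) : ℝ :=
  if s - t ≤ v0 / (-um) then x0 + v0 * (s - t) + um * (s - t) ^ 2 / 2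
  else x0 + v0 ^ 2 / (-2 * um)

def brakedSpeed (um v τ : ℝ) : ℝ := max 0 (v + um * τ)

section

variable {um v v' τ : ℝ}

lemma brakedSpeed_mono (h : v ≤ v') : brakedSpeed um v τ ≤ brakedSpeed um v' τ :=
  max_le_max le_rfl (by linarith)

lemma mbmPos_eq (hum : um < 0) (x t s : ℝ) :
    mbmPos um x v t s = x + (v ^ 2 - brakedSpeed um v (s - t) ^ 2) / (-2 * um) := by
  have hu : um ≠ 0 := hum.ne
  unfold mbmPos brakedSpeed
  split_ifs with hstop
  · have hw : 0 ≤ v + um * (s - t) := by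
      rw [le_div_iff₀ (by linarith)] at hstop
      linarith
    rw [max_eq_right hw]
    field_simp
    ring
  · have hw : v + um * (s - t) ≤ 0 := by
      rw [not_le, div_lt_iff₀ (by linarith)] at hstop
      linarith
    rw [max_eq_left hw]
    ring

lemma sq_sub_brakedSpeed_sq_mono (hum : um < 0) (hτ : 0 ≤ τ) (hv : 0 ≤ v) (h : v ≤ v') :
    v ^ 2 - brakedSpeed um v τ ^ 2 ≤ v' ^ 2 - brakedSpeed um v' τ ^ 2 := by
  have ha : 0 ≤ -um * τ := mul_nonneg (by linarith) hτ
  unfold brakedSpeed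
  rcases le_total (v' + um * τ) 0 with h' | h'
  · rw [max_eq_left h', max_eq_left (by linarith)]
    nlinarith
  · rw [max_eq_right h']
    rcases le_total (v + um * τ) 0 with hw | hw
    · rw [max_eq_left hw]
      nlinarith
    · rw [max_eq_right hw]
      nlinarith

end

theorem stmt_5_general (um L t xL xF vL vF : ℝ)
    (hum : um < 0)
    (hvF : 0 ≤ vF)
    (hgap : xL - xF ≥ L + max 0 ((vF ^ 2 - vL ^ 2) / (-2 * um))) :
    ∀ s, t ≤ s → mbmPos um xL vL t s - mbmPos um xF vF t s ≥ L := by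
  intro s hs
  have hc : 0 < -2 * um := by linarith
  rw [mbmPos_eq hum, mbmPos_eq hum]
  rcases le_total vF vL with hv | hv
  · have hdisp := div_le_div_of_nonneg_right
      (sq_sub_brakedSpeed_sq_mono hum (sub_nonneg.mpr hs) hvF hv) hc.le
    linarith [le_max_left 0 ((vF ^ 2 - vL ^ 2) / (-2 * um))]
  · have hslack : 0 ≤ xL - xF - L - (vF ^ 2 - vL ^ 2) / (-2 * um) := by
      linarith [le_max_right 0 ((vF ^ 2 - vL ^ 2) / (-2 * um))]
    have hw : brakedSpeed um vL (s - t) ^ 2 ≤ brakedSpeed um vF (s - t) ^ 2 :=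
      pow_le_pow_left₀ (le_max_left _ _) (brakedSpeed_mono hv) 2
    linear_combination hslack + div_nonneg (sub_nonneg.mpr hw) hc.le

theorem stmt_5 (um L t xL xF vL vF : ℝ)
    (hum : um < 0) (hL : 0 < L)
    (hvL : 0 ≤ vL) (hvF : 0 ≤ vF) (hx : xF < xL)
    (hgap : xL - xF ≥ L + max 0 ((vF ^ 2 - vL ^ 2) / (-2 * um))) :
    ∀ s, t ≤ s → mbmPos um xL vL t s - mbmPos um xF vF t s ≥ L :=
  stmt_5_general um L t xL xF vL vF hum hvF hgap
end

section
/- Consider two vehicles with double-integrator dynamics where the follower applies the unsaturated safe-following control $u_j = (\frac{v_{j-1}}{v_j}(1 + \sigma_j \frac{u_{j-1}}{-u_m}) - 1)\frac{-u_m}{\sigma_j}$ whenever $v_j > 0$. Then along the resulting trajectories, the safety ratio $\sigma_j = (x_{j-1} - x_j)/\mathcal{D}(v_{j-1}, v_j)$ is constant in time on any interval where $v_j \geq v_{j-1} > 0$ (so that $\mathcal{D}(v_{j-1},v_j) = L + (v_j^2 - v_{j-1}^2)/(-2u_m)$), i.e., $\dot{\sigma}_j = 0$. -/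
/-! The follower's control is chosen so that `v₂ u₂ - v₁ u₁ = -u_m (v₁ - v₂) / σ`, i.e. the safe
distance `𝒟` changes at rate `(v₁ - v₂) / σ`, which is the rate of change of the gap `x₁ - x₂`
divided by `σ = (x₁ - x₂) / 𝒟`. Gap and safe distance therefore have the same logarithmic
derivative, and their ratio is stationary. -/

/-- The branch `v₁ ≤ v₂` of the safe-following distance `𝒟(v₁, v₂)`, where the `max` is dropped. -/
noncomputable def safeDistance (um L v1 v2 : ℝ) : ℝ := L + (v2 ^ 2 - v1 ^ 2) / (-2 * um)

noncomputable def safeFollowingControl (um σ v1 v2 u1 : ℝ) : ℝ :=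
  (v1 / v2 * (1 + σ * (u1 / (-um))) - 1) * (-um / σ)

theorem hasDerivAt_div_eq_zero_of_mul_eq {𝕜 : Type*} [NontriviallyNormedField 𝕜]
    {f g : 𝕜 → 𝕜} {f' g' t : 𝕜} (hf : HasDerivAt f f' t) (hg : HasDerivAt g g' t)
    (hgt : g t ≠ 0) (h : f' * g t = f t * g') :
    HasDerivAt (fun s => f s / g s) 0 t := by
  simpa [h] using hf.fun_div hg hgt

theorem hasDerivAt_safeDistance {um L u1 u2 t : ℝ} {v1 v2 : ℝ → ℝ}
    (hv1 : HasDerivAt v1 u1 t) (hv2 : HasDerivAt v2 u2 t) :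
    HasDerivAt (fun s => safeDistance um L (v1 s) (v2 s)) ((v2 t * u2 - v1 t * u1) / -um) t := by
  unfold safeDistance
  refine ((((hv2.fun_pow 2).fun_sub (hv1.fun_pow 2)).div_const _).const_add L).congr_deriv ?_
  push_cast
  ring

theorem safeFollowingControl_spec {um σ v1 v2 u1 : ℝ} (hum : um ≠ 0) (hv2 : v2 ≠ 0)
    (hσ : σ ≠ 0) :
    (v2 * safeFollowingControl um σ v1 v2 u1 - v1 * u1) / -um = (v1 - v2) / σ := by
  unfold safeFollowingControl
  field_simp
  ring

theorem stmt_8_general (um L t u1 : ℝ) (x1 x2 v1 v2 : ℝ → ℝ)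
    (hum : um < 0)
    (hv : 0 < v1 t) (hvv : v1 t ≤ v2 t)
    (hx1 : HasDerivAt x1 (v1 t) t) (hx2 : HasDerivAt x2 (v2 t) t)
    (hv1 : HasDerivAt v1 u1 t)
    (hσ : (x1 t - x2 t) / (L + ((v2 t) ^ 2 - (v1 t) ^ 2) / (-2 * um)) > 0)
    (hv2 : HasDerivAt v2
      ((v1 t / v2 t *
          (1 + ((x1 t - x2 t) / (L + ((v2 t) ^ 2 - (v1 t) ^ 2) / (-2 * um))) *
            (u1 / (-um))) - 1) *
        (-um / ((x1 t - x2 t) / (L + ((v2 t) ^ 2 - (v1 t) ^ 2) / (-2 * um))))) t) :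
    HasDerivAt
      (fun s => (x1 s - x2 s) / (L + ((v2 s) ^ 2 - (v1 s) ^ 2) / (-2 * um)))
      0 t := by
  change 0 < (x1 t - x2 t) / safeDistance um L (v1 t) (v2 t) at hσ
  change HasDerivAt (fun s => (x1 s - x2 s) / safeDistance um L (v1 s) (v2 s)) 0 t
  have hD : safeDistance um L (v1 t) (v2 t) ≠ 0 := by rintro hD; simp [hD] at hσ
  have hgap : x1 t - x2 t ≠ 0 := by rintro hgap; simp [hgap] at hσ
  set σ := (x1 t - x2 t) / safeDistance um L (v1 t) (v2 t) with hσ_def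
  change HasDerivAt v2 (safeFollowingControl um σ (v1 t) (v2 t) u1) t at hv2
  have hdD := hasDerivAt_safeDistance (um := um) (L := L) hv1 hv2
  rw [safeFollowingControl_spec hum.ne (hv.trans_le hvv).ne' hσ.ne'] at hdD
  refine hasDerivAt_div_eq_zero_of_mul_eq (hx1.sub hx2) hdD hD ?_
  rw [hσ_def]
  field_simp

theorem stmt_8 (um L t u1 : ℝ) (x1 x2 v1 v2 : ℝ → ℝ)
    (hum : um < 0) (hL : 0 < L)
    (hv : 0 < v1 t) (hvv : v1 t ≤ v2 t)
    (hx1 : HasDerivAt x1 (v1 t) t) (hx2 : HasDerivAt x2 (v2 t) t)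
    (hv1 : HasDerivAt v1 u1 t)
    (hσ : (x1 t - x2 t) / (L + ((v2 t) ^ 2 - (v1 t) ^ 2) / (-2 * um)) > 0)
    (hv2 : HasDerivAt v2
      ((v1 t / v2 t *
          (1 + ((x1 t - x2 t) / (L + ((v2 t) ^ 2 - (v1 t) ^ 2) / (-2 * um))) *
            (u1 / (-um))) - 1) *
        (-um / ((x1 t - x2 t) / (L + ((v2 t) ^ 2 - (v1 t) ^ 2) / (-2 * um))))) t)
    (hnear : ∀ᶠ s in nhds t, v1 s ≤ v2 s) :
    HasDerivAt
      (fun s => (x1 s - x2 s) / (L + ((v2 s) ^ 2 - (v1 s) ^ 2) / (-2 * um)))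
      0 t :=
  stmt_8_general um L t u1 x1 x2 v1 v2 hum hv hvv hx1 hx2 hv1 hσ hv2
end
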